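/- arXiv:1611.10304 — 4 statements merged into one kernel-verified Lean document; each statement's English description precedes it below -/
import Mathlib

section
/- Let μ be a finite measure on (0,∞) with ∫ min(1,s) μ(ds) < ∞, and let ν(z) = ∫_{(0,∞)} e^{−s|z|²} μ(ds) for z ∈ ℝᵈ∖{0}. Then for every multi-index j there is a constant c(d,|j|) such that |D^j ν(z)| ≤ c(d,|j|) |z|^{−|j|} ν(z/2) for all z ≠ 0. In particular ν is smooth on ℝᵈ∖{0}. -/
open MeasureTheory Metric
open scoped ENNReal ContDiff

namespace Statement9Aux

noncomputable def gg (μ : Measure ℝ) (k : ℕ) (t : ℝ) : ℝ :=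
  ∫ s, (-s) ^ k * Real.exp (-s * t) ∂μ

set_option linter.unusedSectionVars false
set_option synthInstance.maxHeartbeats 1000000
set_option maxHeartbeats 1000000

variable {μ : Measure ℝ} [IsFiniteMeasure μ]

lemma ae_pos (hsupp : μ (Set.Iic (0 : ℝ)) = 0) : ∀ᵐ s ∂μ, 0 < s := by
  rw [ae_iff]
  have : {a : ℝ | ¬ 0 < a} = Set.Iic 0 := by ext a; simp
  rw [this]; exact hsupp

lemma pointwise (k : ℕ) {s t : ℝ} (hs : 0 ≤ s) (ht : 0 < t) :
    s ^ k * Real.exp (-s * t) ≤ (2 / t) ^ k * (k.factorial : ℝ) * Real.exp (-s * (t / 2)) := by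
  have h2 : (s * t / 2) ^ k ≤ (k.factorial : ℝ) * Real.exp (s * t / 2) := by
    have h := Real.pow_div_factorial_le_exp (x := s * t / 2) (by positivity) k
    have hk : (0 : ℝ) < k.factorial := by exact_mod_cast k.factorial_pos
    rw [div_le_iff₀ hk] at h
    linarith [h]
  have h1 : s ^ k = (2 / t) ^ k * (s * t / 2) ^ k := by
    rw [← mul_pow]; congr 1; field_simp
  have h3 : (s * t / 2) ^ k * Real.exp (-s * (t/2)) ≤ (k.factorial : ℝ) := by
    have := mul_le_mul_of_nonneg_right h2 (Real.exp_pos (-s * (t/2))).le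
    calc (s * t / 2) ^ k * Real.exp (-s * (t/2))
        ≤ (k.factorial : ℝ) * Real.exp (s * t / 2) * Real.exp (-s * (t/2)) := this
      _ = (k.factorial : ℝ) := by
          rw [mul_assoc, ← Real.exp_add]
          ring_nf
          simp
  calc s ^ k * Real.exp (-s * t)
      = (2 / t) ^ k * ((s * t / 2) ^ k * Real.exp (-s * (t/2))) * Real.exp (-s * (t/2)) := by
        rw [h1]; rw [show -s * t = (-s * (t/2)) + (-s * (t/2)) by ring, Real.exp_add]; ring
    _ ≤ (2 / t) ^ k * (k.factorial : ℝ) * Real.exp (-s * (t/2)) := by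
        have h4 : (0:ℝ) ≤ (2/t)^k := by positivity
        have := mul_le_mul_of_nonneg_left h3 h4
        exact mul_le_mul_of_nonneg_right this (Real.exp_pos _).le

lemma integrable_aux (hsupp : μ (Set.Iic (0 : ℝ)) = 0) (k : ℕ) {t : ℝ} (ht : 0 < t) :
    Integrable (fun s => (-s) ^ k * Real.exp (-s * t)) μ := by
  refine Integrable.mono' (integrable_const ((2 / t) ^ k * (k.factorial : ℝ))) ?_ ?_
  · exact (((continuous_id.neg.pow k).mul
      ((continuous_id.neg.mul continuous_const).rexp)).aestronglyMeasurable)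
  · filter_upwards [ae_pos hsupp] with s hs
    have : ‖(-s) ^ k * Real.exp (-s * t)‖ = s ^ k * Real.exp (-s * t) := by
      rw [norm_mul, norm_pow, norm_neg, Real.norm_eq_abs, Real.norm_eq_abs,
        abs_of_pos hs, abs_of_pos (Real.exp_pos _)]
    rw [this]
    calc s ^ k * Real.exp (-s * t) ≤ (2/t)^k * (k.factorial : ℝ) * Real.exp (-s*(t/2)) :=
          pointwise k hs.le ht
      _ ≤ (2/t)^k * (k.factorial : ℝ) * 1 := by
          have : Real.exp (-s*(t/2)) ≤ 1 := Real.exp_le_one_iff.2 (by nlinarith)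
          have h4 : (0:ℝ) ≤ (2/t)^k * (k.factorial : ℝ) := by positivity
          nlinarith
      _ = (2/t)^k * (k.factorial : ℝ) := mul_one _


lemma hasDerivAt_gg (hsupp : μ (Set.Iic (0 : ℝ)) = 0) (k : ℕ) {t : ℝ} (ht : 0 < t) :
    HasDerivAt (gg μ k) (gg μ (k + 1) t) t := by
  have h := hasDerivAt_integral_of_dominated_loc_of_deriv_le (μ := μ) (x₀ := t)
    (F := fun x s => (-s) ^ k * Real.exp (-s * x))
    (F' := fun x s => (-s) ^ (k+1) * Real.exp (-s * x))
    (bound := fun s => (2 / (t/2)) ^ (k+1) * ((k+1).factorial : ℝ))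
    (s := Metric.ball t (t / 2)) (Metric.ball_mem_nhds _ (by positivity))
    (Filter.Eventually.of_forall fun x =>
      (((continuous_id.neg.pow k).mul
        ((continuous_id.neg.mul continuous_const).rexp)).aestronglyMeasurable))
    (integrable_aux hsupp k ht)
    (((continuous_id.neg.pow (k+1)).mul
        ((continuous_id.neg.mul continuous_const).rexp)).aestronglyMeasurable)
    ?_ (integrable_const _) ?_
  · exact h.2
  · filter_upwards [ae_pos hsupp] with s hs
    intro x hx
    have hxt : t / 2 < x := by
      have := abs_sub_lt_iff.1 (mem_ball_iff_norm.1 hx)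
      linarith [this.1, this.2]
    have hnorm : ‖(-s) ^ (k+1) * Real.exp (-s * x)‖ = s ^ (k+1) * Real.exp (-s * x) := by
      rw [norm_mul, norm_pow, norm_neg, Real.norm_eq_abs, Real.norm_eq_abs,
        abs_of_pos hs, abs_of_pos (Real.exp_pos _)]
    rw [hnorm]
    calc s ^ (k+1) * Real.exp (-s * x)
        ≤ s ^ (k+1) * Real.exp (-s * (t/2)) := by
          have : Real.exp (-s * x) ≤ Real.exp (-s * (t/2)) :=
            Real.exp_le_exp.2 (by nlinarith)
          have hp : (0:ℝ) ≤ s ^ (k+1) := by positivity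
          nlinarith
      _ ≤ (2 / (t/2)) ^ (k+1) * ((k+1).factorial : ℝ) * Real.exp (-s * ((t/2)/2)) :=
          pointwise (k+1) hs.le (by positivity)
      _ ≤ (2 / (t/2)) ^ (k+1) * ((k+1).factorial : ℝ) := by
          have : Real.exp (-s * ((t/2)/2)) ≤ 1 := Real.exp_le_one_iff.2 (by nlinarith)
          have h4 : (0:ℝ) ≤ (2/(t/2))^(k+1) * ((k+1).factorial : ℝ) := by positivity
          nlinarith
  · filter_upwards with s
    intro x hx
    have h1 : HasDerivAt (fun x : ℝ => -s * x) (-s) x := by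
      simpa using (hasDerivAt_id x).const_mul (-s)
    have h2 := h1.exp
    have h3 := h2.const_mul ((-s) ^ k)
    refine h3.congr_deriv ?_
    rw [pow_succ]; ring

lemma gg_nonneg (t : ℝ) : 0 ≤ gg μ 0 t :=
  integral_nonneg fun s => by simp [gg]; positivity

lemma gg_mono (hsupp : μ (Set.Iic (0 : ℝ)) = 0) {t₁ t₂ : ℝ} (h1 : 0 < t₁) (h12 : t₁ ≤ t₂) :
    gg μ 0 t₂ ≤ gg μ 0 t₁ := by
  refine integral_mono_ae (by simpa using integrable_aux hsupp 0 (lt_of_lt_of_le h1 h12))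
    (by simpa using integrable_aux hsupp 0 h1) ?_
  filter_upwards [ae_pos hsupp] with s hs
  simp only [pow_zero, one_mul]
  exact Real.exp_le_exp.2 (by nlinarith)

lemma gg_bound (hsupp : μ (Set.Iic (0 : ℝ)) = 0) (k : ℕ) {t : ℝ} (ht : 0 < t) :
    |gg μ k t| ≤ (2 / t) ^ k * (k.factorial : ℝ) * gg μ 0 (t / 2) := by
  have h1 : |gg μ k t| ≤ ∫ s, ‖(-s) ^ k * Real.exp (-s * t)‖ ∂μ := by
    rw [← Real.norm_eq_abs]; exact norm_integral_le_integral_norm _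
  refine h1.trans ?_
  have h2 : ∫ s, ‖(-s) ^ k * Real.exp (-s * t)‖ ∂μ
      ≤ ∫ s, (2 / t) ^ k * (k.factorial : ℝ) * ((-s) ^ 0 * Real.exp (-s * (t/2))) ∂μ := by
    refine integral_mono_ae ((integrable_aux hsupp k ht).norm)
      ((integrable_aux hsupp 0 (by positivity)).const_mul _) ?_
    filter_upwards [ae_pos hsupp] with s hs
    have hnorm : ‖(-s) ^ k * Real.exp (-s * t)‖ = s ^ k * Real.exp (-s * t) := by
      rw [norm_mul, norm_pow, norm_neg, Real.norm_eq_abs, Real.norm_eq_abs,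
        abs_of_pos hs, abs_of_pos (Real.exp_pos _)]
    rw [hnorm]
    simpa using pointwise k hs.le ht
  refine h2.trans ?_
  rw [MeasureTheory.integral_const_mul]
  rfl

lemma analyticOnNhd_gg (hsupp : μ (Set.Iic (0 : ℝ)) = 0) :
    AnalyticOnNhd ℝ (gg μ 0) (Set.Ioi (0 : ℝ)) := by
  set GC : ℂ → ℂ := fun w => ∫ s, Complex.exp (-(s : ℂ) * w) ∂μ with hGC
  have hopen : IsOpen {w : ℂ | 0 < w.re} := isOpen_lt continuous_const Complex.continuous_re
  have hmeas : ∀ x : ℂ, AEStronglyMeasurable (fun s : ℝ => Complex.exp (-(s : ℂ) * x)) μ := by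
    intro x
    exact ((Complex.continuous_ofReal.neg.mul continuous_const).cexp).aestronglyMeasurable
  have hdiff : DifferentiableOn ℂ GC {w : ℂ | 0 < w.re} := by
    intro w hw
    have hre : 0 < w.re := hw
    have h := hasDerivAt_integral_of_dominated_loc_of_deriv_le (μ := μ) (x₀ := w)
      (F := fun x s => Complex.exp (-(s : ℂ) * x))
      (F' := fun x s => -(s : ℂ) * Complex.exp (-(s : ℂ) * x))
      (bound := fun s => (2 / (w.re / 2)) ^ 1 * ((1).factorial : ℝ))
      (s := Metric.ball w (w.re / 2)) (Metric.ball_mem_nhds _ (by positivity))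
      (Filter.Eventually.of_forall fun x => hmeas x)
      ?_ ?_ ?_ (integrable_const _) ?_
    · exact (h.2.differentiableAt).differentiableWithinAt
    · -- Integrable (F w)
      refine Integrable.mono' (integrable_const 1) (hmeas w) ?_
      filter_upwards [ae_pos hsupp] with s hs
      rw [Complex.norm_exp]
      refine Real.exp_le_one_iff.2 ?_
      simp only [neg_mul, Complex.neg_re, Complex.mul_re, Complex.ofReal_re, Complex.ofReal_im]
      nlinarith
    · exact (((Complex.continuous_ofReal.neg).mul
        ((Complex.continuous_ofReal.neg.mul continuous_const).cexp)).aestronglyMeasurable)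
    · filter_upwards [ae_pos hsupp] with s hs
      intro x hx
      have hxre : w.re / 2 < x.re := by
        have h1 : ‖x - w‖ < w.re / 2 := mem_ball_iff_norm.1 hx
        have h2 : |x.re - w.re| ≤ ‖x - w‖ := by
          simpa using Complex.abs_re_le_norm (x - w)
        have := abs_sub_lt_iff.1 (lt_of_le_of_lt h2 h1)
        linarith [this.1, this.2]
      have hnorm : ‖-(s : ℂ) * Complex.exp (-(s : ℂ) * x)‖ = s * Real.exp (-s * x.re) := by
        rw [norm_mul, norm_neg, Complex.norm_exp,
          Complex.norm_real, Real.norm_eq_abs, abs_of_pos hs]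
        congr 2
        simp [Complex.mul_re]
      rw [hnorm]
      have hp := pointwise 1 hs.le (show (0:ℝ) < w.re/2 by positivity)
      have h5 : Real.exp (-s * ((w.re/2)/2)) ≤ 1 := Real.exp_le_one_iff.2 (by nlinarith)
      have h6 : Real.exp (-s * x.re) ≤ Real.exp (-s * (w.re/2)) :=
        Real.exp_le_exp.2 (by nlinarith)
      have h4 : (0:ℝ) ≤ (2/(w.re/2))^1 * ((1).factorial : ℝ) := by positivity
      have h8 : s * Real.exp (-s * x.re) ≤ s * Real.exp (-s*(w.re/2)) := by nlinarith
      have h9 : (2/(w.re/2))^1 * ((1).factorial : ℝ) * Real.exp (-s * ((w.re/2)/2))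
          ≤ (2/(w.re/2))^1 * ((1).factorial : ℝ) := by nlinarith
      have h10 : s * Real.exp (-s*(w.re/2)) = s ^ 1 * Real.exp (-s*(w.re/2)) := by rw [pow_one]
      linarith [hp, h8, h9, h10.le, h10.ge]
    · filter_upwards with s
      intro x hx
      have h1 : HasDerivAt (fun x : ℂ => -(s:ℂ) * x) (-(s:ℂ)) x := by
        simpa using (hasDerivAt_id x).const_mul (-(s:ℂ))
      have h2 := h1.cexp
      refine h2.congr_deriv ?_
      ring
  have hG : AnalyticOnNhd ℂ GC {w : ℂ | 0 < w.re} := hdiff.analyticOnNhd hopen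
  have hGR : AnalyticOnNhd ℝ GC {w : ℂ | 0 < w.re} := hG.restrictScalars
  have hOfReal : AnalyticOnNhd ℝ (fun t : ℝ => (t : ℂ)) (Set.Ioi (0:ℝ)) := by
    exact Complex.ofRealCLM.analyticOnNhd _
  have hcomp : AnalyticOnNhd ℝ (fun t : ℝ => (GC (t : ℂ)).re) (Set.Ioi (0:ℝ)) := by
    have h1 : AnalyticOnNhd ℝ (fun t : ℝ => GC (t : ℂ)) (Set.Ioi (0:ℝ)) := by
      refine hGR.comp hOfReal ?_
      intro t ht
      simpa using ht
    exact (Complex.reCLM.analyticOnNhd (Set.univ)).comp h1 (Set.mapsTo_univ _ _)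
  refine hcomp.congr isOpen_Ioi ?_
  intro t ht
  have h6 : GC (t : ℂ) = ((gg μ 0 t : ℝ) : ℂ) := by
    rw [hGC]
    simp only [gg, pow_zero, one_mul]
    have h7 : (fun s : ℝ => Complex.exp (-(s:ℂ) * (t:ℂ)))
        = fun s : ℝ => ((Real.exp (-s * t) : ℝ) : ℂ) := by
      funext s
      rw [show (-(s:ℂ) * (t:ℂ)) = ((-s * t : ℝ) : ℂ) by push_cast; ring,
        ← Complex.ofReal_exp]
    rw [h7]
    exact integral_ofReal (𝕜 := ℂ)
  show (GC (t:ℂ)).re = gg μ 0 t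
  rw [h6]
  simp

lemma iterDerivG (hsupp : μ (Set.Iic (0 : ℝ)) = 0) {b : ℝ} (hb : 0 < b) (k : ℕ) :
    ∀ t ∈ Set.Ioi (0:ℝ), iteratedDerivWithin k (fun u => gg μ 0 (b * u)) (Set.Ioi 0) t
      = b ^ k * gg μ k (b * t) := by
  induction k with
  | zero => intro t ht; simp
  | succ k ih =>
    intro t ht
    rw [iteratedDerivWithin_succ]
    rw [derivWithin_congr (fun u hu => ih u hu) (ih t ht)]
    rw [derivWithin_of_isOpen isOpen_Ioi ht]
    have h1 : HasDerivAt (fun u : ℝ => b * u) b t := by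
      simpa using (hasDerivAt_id t).const_mul b
    have h2 : HasDerivAt (fun u : ℝ => gg μ k (b * u)) (gg μ (k+1) (b*t) * b) t :=
      (hasDerivAt_gg hsupp k (mul_pos hb (Set.mem_Ioi.mp ht))).comp t h1
    have h3 := (h2.const_mul (b ^ k)).deriv
    rw [h3]; ring

section E
variable {E : Type*} [NormedAddCommGroup E] [InnerProductSpace ℝ E] (z : E)

lemma idA0 : ‖iteratedFDeriv ℝ 0 (id : E → E) z‖ = ‖z‖ := by
  rw [norm_iteratedFDeriv_zero]; rfl

lemma idA1 : ‖iteratedFDeriv ℝ 1 (id : E → E) z‖ ≤ 1 := by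
  have h := norm_iteratedFDeriv_fderiv (𝕜 := ℝ) (f := (id : E → E)) (n := 0) (x := z)
  rw [← h, norm_iteratedFDeriv_zero]
  simp only [fderiv_id]
  exact ContinuousLinearMap.norm_id_le

lemma idA2 (j : ℕ) : ‖iteratedFDeriv ℝ (j + 2) (id : E → E) z‖ = 0 := by
  have h := norm_iteratedFDeriv_fderiv (𝕜 := ℝ) (f := (id : E → E)) (n := j + 1) (x := z)
  rw [← h]
  have h2 : fderiv ℝ (id : E → E) = fun _ => ContinuousLinearMap.id ℝ E := by
    funext x; exact fderiv_id
  rw [h2, iteratedFDeriv_succ_const]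
  simp

noncomputable def rinner (E : Type*) [NormedAddCommGroup E] [InnerProductSpace ℝ E] :
    E →L[ℝ] E →L[ℝ] ℝ :=
  LinearMap.mkContinuous₂ (innerₗ E) 1 fun x y => by
    simpa using norm_inner_le_norm (𝕜 := ℝ) x y

lemma rinner_apply (x y : E) : rinner E x y = inner ℝ x y := rfl

lemma rinner_norm_le : ‖rinner E‖ ≤ 1 :=
  LinearMap.mkContinuous₂_norm_le _ zero_le_one _

lemma Qbound (a : ℝ) (ha : 0 ≤ a) (i : ℕ) (hi : 1 ≤ i) {D : ℝ} (hD : 0 < D)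
    (h1 : a * (2 * ‖z‖) ≤ D) (h2 : 2 * a ≤ D ^ 2) :
    ‖iteratedFDeriv ℝ i (fun w : E => a * ‖w‖ ^ 2) z‖ ≤ D ^ i := by
  have hfun : (fun w : E => a * ‖w‖ ^ 2)
      = fun w => (a • rinner E) (id w) (id w) := by
    funext w
    simp only [ContinuousLinearMap.smul_apply, ContinuousLinearMap.coe_smul', Pi.smul_apply,
      smul_eq_mul, id_eq]
    rw [rinner_apply, real_inner_self_eq_norm_sq]
  have hB : ‖a • rinner E‖ ≤ a := by
    refine le_trans (ContinuousLinearMap.opNorm_smul_le a (rinner E)) ?_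
    rw [Real.norm_eq_abs, abs_of_nonneg ha]
    nlinarith [rinner_norm_le (E := E), ContinuousLinearMap.opNorm_nonneg (rinner E)]
  rw [hfun]
  have key := (a • rinner E).norm_iteratedFDeriv_le_of_bilinear
    (f := (id : E → E)) (g := (id : E → E)) contDiff_id contDiff_id z (n := i)
    (le_refl (i : WithTop ℕ∞))
  refine key.trans ?_
  have hBnn : (0:ℝ) ≤ ‖a • rinner E‖ := ContinuousLinearMap.opNorm_nonneg _
  set S := ∑ j ∈ Finset.range (i + 1), ((i.choose j : ℕ) : ℝ) *
      ‖iteratedFDeriv ℝ j (id : E → E) z‖ * ‖iteratedFDeriv ℝ (i - j) (id : E → E) z‖ with hS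
  have hSnn : 0 ≤ S := Finset.sum_nonneg fun j _ => by positivity
  have step : ∀ bnd : ℝ, S ≤ bnd → a * bnd ≤ D ^ i → ‖a • rinner E‖ * S ≤ D ^ i := by
    intro bnd hb1 hb2
    calc ‖a • rinner E‖ * S ≤ a * S := by nlinarith
      _ ≤ a * bnd := by nlinarith
      _ ≤ D ^ i := hb2
  match i, hi with
  | 1, _ =>
    refine step (2 * ‖z‖) ?_ (by rw [pow_one]; linarith)
    have e0 := idA0 z; have e1 := idA1 z
    rw [hS, Finset.sum_range_succ, Finset.sum_range_one]
    have : (1:ℕ) - 1 = 0 := rfl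
    rw [this, e0]
    simp only [Nat.choose_self, Nat.choose_zero_right, Nat.cast_one, one_mul,
      Nat.sub_zero]
    nlinarith [norm_nonneg z, norm_nonneg (iteratedFDeriv ℝ 1 (id : E → E) z)]
  | 2, _ =>
    refine step 2 ?_ (by nlinarith)
    have e0 := idA0 z; have e1 := idA1 z; have e2 := idA2 z 0
    rw [hS, Finset.sum_range_succ, Finset.sum_range_succ, Finset.sum_range_one]
    have ha2 : (2:ℕ) - 2 = 0 := rfl
    have ha1 : (2:ℕ) - 1 = 1 := rfl
    have ha0 : (2:ℕ) - 0 = 0 + 2 := rfl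
    rw [ha2, ha1, ha0, e2, e0]
    simp only [Nat.choose_self, Nat.choose_zero_right, Nat.cast_one, one_mul, mul_zero, zero_add,
      Nat.choose_one_right, Nat.cast_ofNat, mul_one]
    nlinarith [norm_nonneg (iteratedFDeriv ℝ 1 (id : E → E) z)]
  | (j + 3), _ =>
    refine step 0 ?_ (by simpa using by positivity)
    rw [hS]
    refine le_of_eq (Finset.sum_eq_zero fun l hl => ?_)
    rcases le_or_gt 2 l with h | h
    · obtain ⟨m, rfl⟩ : ∃ m, l = m + 2 := ⟨l - 2, by omega⟩
      rw [idA2]; ring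
    · obtain ⟨m, hm⟩ : ∃ m, j + 3 - l = m + 2 := ⟨j + 1 - l, by omega⟩
      rw [hm, idA2]; ring
end E


end Statement9Aux

open Statement9Aux

set_option maxHeartbeats 1000000 in
set_option synthInstance.maxHeartbeats 1000000 in
/-- Let `μ` be a finite measure on `(0,∞)` with `∫ min(1,s) μ(ds) < ∞`, and
let `ν(z) = ∫ e^{−s|z|²} μ(ds)`. Then `ν` is smooth on `ℝᵈ∖{0}` and for every order `n`
there is `c = c(d,n)` with `‖Dⁿν(z)‖ ≤ c |z|^{−n} ν(z/2)` for all `z ≠ 0`. -/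
theorem statement9 (d : ℕ) (hd : 1 ≤ d) (μ : Measure ℝ) [IsFiniteMeasure μ]
    (hsupp : μ (Set.Iic (0 : ℝ)) = 0)
    (hint : ∫⁻ s, ENNReal.ofReal (min 1 s) ∂μ < ⊤)
    (ν : EuclideanSpace ℝ (Fin d) → ℝ)
    (hν : ∀ z : EuclideanSpace ℝ (Fin d), ν z = ∫ s, Real.exp (-s * ‖z‖ ^ 2) ∂μ) :
    ContDiffOn ℝ (⊤ : ℕ∞) ν {(0 : EuclideanSpace ℝ (Fin d))}ᶜ ∧
    ∀ n : ℕ, ∃ c : ℝ, 0 < c ∧ ∀ z : EuclideanSpace ℝ (Fin d), z ≠ 0 →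
      ‖iteratedFDeriv ℝ n ν z‖ ≤ c * ‖z‖ ^ (-(n : ℝ)) * ν ((2 : ℝ)⁻¹ • z) := by
  have hν' : ∀ z : EuclideanSpace ℝ (Fin d), ν z = gg μ 0 (‖z‖ ^ 2) := by
    intro z; rw [hν]; simp [gg]
  have hgan : AnalyticOnNhd ℝ (gg μ 0) (Set.Ioi (0:ℝ)) := analyticOnNhd_gg hsupp
  constructor
  · have hg' : ContDiffOn ℝ (⊤ : ℕ∞) (gg μ 0) (Set.Ioi (0:ℝ)) := hgan.contDiffOn (uniqueDiffOn_Ioi 0)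
    have hq : ContDiff ℝ (⊤ : WithTop ℕ∞)
        (fun z : EuclideanSpace ℝ (Fin d) => ‖z‖ ^ 2) := contDiff_norm_sq ℝ
    have hmaps : Set.MapsTo (fun z : EuclideanSpace ℝ (Fin d) => ‖z‖ ^ 2)
        {(0 : EuclideanSpace ℝ (Fin d))}ᶜ (Set.Ioi 0) := by
      intro w hw
      have hw0 : w ≠ 0 := hw
      have : 0 < ‖w‖ := norm_pos_iff.mpr hw0
      simp only [Set.mem_Ioi]
      positivity
    exact (hg'.comp (hq.of_le le_top).contDiffOn hmaps).congr fun w hw => hν' w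
  · intro n
    refine ⟨(n.factorial : ℝ) * (2 ^ n * (n.factorial : ℝ)) * 2 ^ n, by positivity, ?_⟩
    intro z hz
    have hr0 : 0 < ‖z‖ := norm_pos_iff.mpr hz
    set r : ℝ := ‖z‖ with hr
    have hopen : IsOpen ({(0 : EuclideanSpace ℝ (Fin d))}ᶜ : Set _) := isOpen_compl_singleton
    have hzmem : z ∈ ({(0 : EuclideanSpace ℝ (Fin d))}ᶜ : Set _) := hz
    set Q : EuclideanSpace ℝ (Fin d) → ℝ := fun w => (r ^ 2)⁻¹ * ‖w‖ ^ 2 with hQdef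
    set G : ℝ → ℝ := fun u => gg μ 0 (r ^ 2 * u) with hGdef
    have hcompEq : ν = G ∘ Q := by
      funext w
      simp only [hGdef, hQdef, Function.comp_apply]
      rw [hν' w]
      congr 1
      field_simp
    have hGsmooth : ContDiffOn ℝ (n : WithTop ℕ∞) G (Set.Ioi 0) := by
      refine ((hgan.contDiffOn (uniqueDiffOn_Ioi 0)).comp
        ((contDiff_const.mul contDiff_id).contDiffOn) ?_)
      intro t ht
      simp only [Set.mem_Ioi] at *
      positivity
    have hQsmooth : ContDiffOn ℝ (n : WithTop ℕ∞) Q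
        ({(0 : EuclideanSpace ℝ (Fin d))}ᶜ : Set _) :=
      (contDiff_const.mul (contDiff_norm_sq ℝ)).contDiffOn
    have hmapsQ : Set.MapsTo Q ({(0 : EuclideanSpace ℝ (Fin d))}ᶜ : Set _) (Set.Ioi 0) := by
      intro w hw
      have hw0 : w ≠ 0 := hw
      have h1 : 0 < ‖w‖ := norm_pos_iff.mpr hw0
      simp only [hQdef, Set.mem_Ioi]
      positivity
    have hQz : Q z = 1 := by
      simp only [hQdef, ← hr]
      field_simp
    set X : ℝ := gg μ 0 (r ^ 2 / 2) with hX
    have hXnn : 0 ≤ X := gg_nonneg _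
    have hCbound : ∀ i, i ≤ n → ‖iteratedFDerivWithin ℝ i G (Set.Ioi 0) (Q z)‖
        ≤ 2 ^ n * (n.factorial : ℝ) * X := by
      intro i hi
      rw [hQz, norm_iteratedFDerivWithin_eq_norm_iteratedDerivWithin, Real.norm_eq_abs]
      have hder := iterDerivG hsupp (b := r ^ 2) (by positivity) i 1 (Set.mem_Ioi.mpr one_pos)
      rw [hGdef, hder]
      have hb1 : |(r ^ 2) ^ i * gg μ i (r ^ 2 * 1)| = (r ^ 2) ^ i * |gg μ i (r ^ 2)| := by
        rw [abs_mul, abs_of_nonneg (by positivity : (0:ℝ) ≤ (r^2)^i), mul_one]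
      rw [hb1]
      have hb2 := gg_bound hsupp i (show (0:ℝ) < r ^ 2 by positivity)
      calc (r ^ 2) ^ i * |gg μ i (r ^ 2)|
          ≤ (r ^ 2) ^ i * ((2 / r ^ 2) ^ i * (i.factorial : ℝ) * gg μ 0 (r ^ 2 / 2)) := by
            have : (0:ℝ) ≤ (r^2)^i := by positivity
            nlinarith [abs_nonneg (gg μ i (r ^ 2))]
        _ = 2 ^ i * (i.factorial : ℝ) * X := by
            rw [hX, ← mul_assoc, ← mul_assoc, ← mul_pow]
            congr 3
            field_simp
        _ ≤ 2 ^ n * (n.factorial : ℝ) * X := by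
            have h2i : (2:ℝ) ^ i ≤ 2 ^ n := by
              exact pow_le_pow_right₀ (by norm_num) hi
            have hfi : (i.factorial : ℝ) ≤ (n.factorial : ℝ) := by
              exact_mod_cast Nat.factorial_le hi
            have hp2 : (0:ℝ) ≤ (i.factorial : ℝ) := by positivity
            exact mul_le_mul (mul_le_mul h2i hfi hp2 (by positivity)) (le_refl X) hXnn
              (by positivity)
    have hDbound : ∀ i, 1 ≤ i → i ≤ n →
        ‖iteratedFDerivWithin ℝ i Q ({(0 : EuclideanSpace ℝ (Fin d))}ᶜ : Set _) z‖
          ≤ (2 / r) ^ i := by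
      intro i h1i hin
      rw [iteratedFDerivWithin_of_isOpen i hopen hzmem]
      refine Qbound z ((r ^ 2)⁻¹) (by positivity) i h1i (by positivity) ?_ ?_
      · rw [← hr]
        refine le_of_eq ?_
        field_simp
      · rw [div_pow, div_eq_mul_inv]
        have hinv : (0:ℝ) ≤ (r ^ 2)⁻¹ := by positivity
        nlinarith
    have key := norm_iteratedFDerivWithin_comp_le (𝕜 := ℝ) (g := G) (f := Q)
      (s := ({(0 : EuclideanSpace ℝ (Fin d))}ᶜ : Set _)) (t := Set.Ioi 0)
      (N := (n : WithTop ℕ∞)) (n := n) hGsmooth hQsmooth le_rfl (uniqueDiffOn_Ioi 0)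
      hopen.uniqueDiffOn hmapsQ hzmem hCbound hDbound
    have h0 : iteratedFDeriv ℝ n ν z
        = iteratedFDerivWithin ℝ n (G ∘ Q) ({(0 : EuclideanSpace ℝ (Fin d))}ᶜ : Set _) z := by
      rw [← hcompEq]
      exact (iteratedFDerivWithin_of_isOpen n hopen hzmem).symm
    rw [h0]
    refine key.trans ?_
    have hν2 : ν ((2:ℝ)⁻¹ • z) = gg μ 0 (r ^ 2 / 4) := by
      rw [hν' _]
      congr 1
      rw [norm_smul, ← hr]
      rw [mul_pow]
      norm_num
      ring
    have hmono : X ≤ gg μ 0 (r ^ 2 / 4) :=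
      gg_mono hsupp (by positivity) (by nlinarith)
    rw [hν2]
    have hrpow : ‖z‖ ^ (-(n:ℝ)) = (r ^ n)⁻¹ := by
      rw [← hr, Real.rpow_neg (by positivity), Real.rpow_natCast]
    rw [hrpow]
    have heq : (n.factorial : ℝ) * (2 ^ n * (n.factorial : ℝ) * X) * (2 / r) ^ n
        = ((n.factorial : ℝ) * (2 ^ n * (n.factorial : ℝ)) * 2 ^ n) * (r ^ n)⁻¹ * X := by
      rw [div_pow]
      field_simp
    rw [heq]
    have hcpos : (0:ℝ) ≤ ((n.factorial : ℝ) * (2 ^ n * (n.factorial : ℝ)) * 2 ^ n) * (r ^ n)⁻¹ := by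
      positivity
    nlinarith [hmono, hcpos, mul_le_mul_of_nonneg_left hmono hcpos]
end

section
/- Let φ : (0,∞) → (0,∞) be non-increasing, let s ≤ 0, and suppose there are constants A > 0 and a > s such that φ(r₂)/φ(r₁) ≥ A (r₂/r₁)^a for all 0 < r₁ < r₂. Then there is C > 0 such that C⁻¹ r^{−s} φ(r) ≤ ∫₀ʳ t^{−s−1} φ(t) dt ≤ C r^{−s} φ(r) for all r > 0. -/
/-!
On `(r/2, r)` monotonicity gives `t^{-s-1} φ(t) ≥ (r/2)^{-s} φ(r) / r`, which yields the lower
bound. The scaling hypothesis gives `φ(t) ≤ A⁻¹ (t/r)^a φ(r)` for `t < r`, so the integrand is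
dominated by a multiple of `t^{a-s-1}`; since `a - s > 0` this is integrable at `0`, with integral
`A⁻¹ (a-s)⁻¹ r^{-s} φ(r)`.
-/

open MeasureTheory Set

lemma le_inv_mul_rpow_mul_of_mul_rpow_le_div {A a t r x y : ℝ} (hA : 0 < A) (ht : 0 < t)
    (hr : 0 < r) (hx : 0 < x) (h : A * (r / t) ^ a ≤ y / x) : x ≤ A⁻¹ * (t / r) ^ a * y := by
  have hq : 0 < (t / r) ^ a := by positivity
  rw [← inv_div, Real.inv_rpow (by positivity), le_div_iff₀ hx] at h
  calc x = A⁻¹ * (t / r) ^ a * (A * ((t / r) ^ a)⁻¹ * x) := by field_simp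
    _ ≤ A⁻¹ * (t / r) ^ a * y := by gcongr

theorem integral_Ioo_zero_rpow_sub_one {p r : ℝ} (hp : 0 < p) (hr : 0 ≤ r) :
    ∫ t in Ioo 0 r, t ^ (p - 1) = r ^ p / p := by
  rw [← integral_Ioc_eq_integral_Ioo, ← intervalIntegral.integral_of_le hr,
    integral_rpow (Or.inl (by linarith)), sub_add_cancel, Real.zero_rpow hp.ne', sub_zero]

theorem integrableOn_and_setIntegral_Ioo_zero_le_of_le_mul_rpow {g : ℝ → ℝ} {c p r : ℝ}
    (hp : 0 < p) (hr : 0 < r) (hg : AEStronglyMeasurable g (volume.restrict (Ioo 0 r)))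
    (hg0 : ∀ t ∈ Ioo 0 r, 0 ≤ g t) (hgle : ∀ t ∈ Ioo 0 r, g t ≤ c * t ^ (p - 1)) :
    IntegrableOn g (Ioo 0 r) ∧ ∫ t in Ioo 0 r, g t ≤ c * (r ^ p / p) := by
  have hdom : IntegrableOn (fun t => c * t ^ (p - 1)) (Ioo 0 r) :=
    ((intervalIntegral.integrableOn_Ioo_rpow_iff hr).mpr (by linarith)).const_mul c
  have hint : IntegrableOn g (Ioo 0 r) :=
    hdom.mono' hg <| ae_restrict_of_forall_mem measurableSet_Ioo fun t ht => by
      rw [Real.norm_of_nonneg (hg0 t ht)]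
      exact hgle t ht
  refine ⟨hint, ?_⟩
  calc ∫ t in Ioo 0 r, g t ≤ ∫ t in Ioo 0 r, c * t ^ (p - 1) :=
        setIntegral_mono_on hint hdom measurableSet_Ioo hgle
    _ = c * (r ^ p / p) := by rw [integral_const_mul, integral_Ioo_zero_rpow_sub_one hp hr.le]

theorem mul_half_le_setIntegral_Ioo_zero {g : ℝ → ℝ} {m r : ℝ} (hr : 0 < r)
    (hint : IntegrableOn g (Ioo 0 r)) (hg0 : ∀ t ∈ Ioo 0 r, 0 ≤ g t)
    (hm : ∀ t ∈ Ioo (r / 2) r, m ≤ g t) : m * (r / 2) ≤ ∫ t in Ioo 0 r, g t := by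
  have hsub : Ioo (r / 2) r ⊆ Ioo 0 r := Ioo_subset_Ioo (by positivity) le_rfl
  calc m * (r / 2) = m * volume.real (Ioo (r / 2) r) := by
        rw [Real.volume_real_Ioo_of_le (by linarith)]; ring
    _ ≤ ∫ t in Ioo (r / 2) r, g t :=
        setIntegral_ge_of_const_le_real measurableSet_Ioo measure_Ioo_lt_top.ne hm
          (hint.mono_set hsub)
    _ ≤ ∫ t in Ioo 0 r, g t :=
        setIntegral_mono_set hint (ae_restrict_of_forall_mem measurableSet_Ioo hg0)
          hsub.eventuallyLE

section Scaling

variable {φ : ℝ → ℝ} {s r t : ℝ}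

lemma rpow_sub_one_mul_le_of_lower_scaling {A a : ℝ} (hpos : ∀ r : ℝ, 0 < r → 0 < φ r)
    (hA : 0 < A) (hscal : ∀ r1 r2 : ℝ, 0 < r1 → r1 < r2 → A * (r2 / r1) ^ a ≤ φ r2 / φ r1)
    (ht : 0 < t) (htr : t < r) :
    t ^ (-s - 1) * φ t ≤ A⁻¹ * r ^ (-s) * φ r / r ^ (a - s) * t ^ (a - s - 1) := by
  have hr : 0 < r := ht.trans htr
  have hφt := le_inv_mul_rpow_mul_of_mul_rpow_le_div hA ht hr (hpos t ht) (hscal t r ht htr)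
  calc t ^ (-s - 1) * φ t ≤ t ^ (-s - 1) * (A⁻¹ * (t / r) ^ a * φ r) := by gcongr
    _ = A⁻¹ * r ^ (-s) * φ r / r ^ (a - s) * t ^ (a - s - 1) := by
        rw [Real.div_rpow ht.le hr.le, show a - s - 1 = (-s - 1) + a by ring,
          Real.rpow_add ht, show a - s = a + -s by ring, Real.rpow_add hr]
        field_simp

lemma le_rpow_sub_one_mul_of_antitone (hmono : ∀ r1 r2 : ℝ, 0 < r1 → r1 ≤ r2 → φ r2 ≤ φ r1)
    (hpos : ∀ r : ℝ, 0 < r → 0 < φ r) (hs : s ≤ 0) (hr : 0 < r) (ht : t ∈ Ioo (r / 2) r) :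
    r ^ (-s) / 2 ^ (-s) * φ r / r ≤ t ^ (-s - 1) * φ t := by
  have ht0 : 0 < t := lt_trans (by positivity) ht.1
  have hφr := hpos r hr
  rw [← Real.div_rpow hr.le zero_le_two, Real.rpow_sub_one ht0.ne']
  calc (r / 2) ^ (-s) * φ r / r ≤ t ^ (-s) * φ t / r := by
        gcongr
        · linarith
        · exact ht.1.le
        · exact hmono t r ht0 ht.2.le
    _ ≤ t ^ (-s) * φ t / t := by
        have := hpos t ht0
        gcongr
        exact ht.2.le
    _ = t ^ (-s) / t * φ t := by ring

end Scaling

/-- Let `φ : (0,∞) → (0,∞)` be non-increasing, `s ≤ 0`, and suppose there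
are `A > 0`, `a > s` with `φ(r₂)/φ(r₁) ≥ A (r₂/r₁)^a` for all `0 < r₁ < r₂`. Then there is
`C > 0` with `C⁻¹ r^{−s} φ(r) ≤ ∫₀ʳ t^{−s−1} φ(t) dt ≤ C r^{−s} φ(r)` for all `r > 0`. -/
theorem statement10 (φ : ℝ → ℝ) (hpos : ∀ r : ℝ, 0 < r → 0 < φ r)
    (hmono : ∀ r1 r2 : ℝ, 0 < r1 → r1 ≤ r2 → φ r2 ≤ φ r1)
    (s : ℝ) (hs : s ≤ 0) (A a : ℝ) (hA : 0 < A) (ha : s < a)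
    (hscal : ∀ r1 r2 : ℝ, 0 < r1 → r1 < r2 → A * (r2 / r1) ^ a ≤ φ r2 / φ r1) :
    ∃ C : ℝ, 0 < C ∧ ∀ r : ℝ, 0 < r →
      C⁻¹ * (r ^ (-s) * φ r) ≤ (∫ t in Set.Ioo (0 : ℝ) r, t ^ (-s - 1) * φ t) ∧
      (∫ t in Set.Ioo (0 : ℝ) r, t ^ (-s - 1) * φ t) ≤ C * (r ^ (-s) * φ r) := by
  have has : 0 < a - s := sub_pos.mpr ha
  refine ⟨max (A⁻¹ * (a - s)⁻¹) (2 * 2 ^ (-s)), lt_max_of_lt_right (by positivity),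
    fun r hr => ?_⟩
  have hφr := hpos r hr
  have hmeas : AEStronglyMeasurable (fun t => t ^ (-s - 1) * φ t) (volume.restrict (Ioo 0 r)) :=
    ((by fun_prop : Measurable fun t : ℝ => t ^ (-s - 1)).aemeasurable.mul
      (aemeasurable_restrict_of_antitoneOn measurableSet_Ioo
        fun x hx y _ hxy => hmono x y hx.1 hxy)).aestronglyMeasurable
  have hnonneg : ∀ t ∈ Ioo 0 r, 0 ≤ t ^ (-s - 1) * φ t := fun t ht => by
    have := hpos t ht.1
    have := ht.1
    positivity
  obtain ⟨hint, hupper⟩ := integrableOn_and_setIntegral_Ioo_zero_le_of_le_mul_rpow has hr hmeas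
    hnonneg fun t ht => rpow_sub_one_mul_le_of_lower_scaling hpos hA hscal ht.1 ht.2
  have hlower := mul_half_le_setIntegral_Ioo_zero hr hint hnonneg
    fun t ht => le_rpow_sub_one_mul_of_antitone hmono hpos hs hr ht
  constructor
  · calc _ ≤ (2 * 2 ^ (-s))⁻¹ * (r ^ (-s) * φ r) := by gcongr; exact le_max_right _ _
      _ = r ^ (-s) / 2 ^ (-s) * φ r / r * (r / 2) := by field_simp
      _ ≤ _ := hlower
  · calc _ ≤ _ := hupper
      _ = A⁻¹ * (a - s)⁻¹ * (r ^ (-s) * φ r) := by field_simp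
      _ ≤ _ := by gcongr; exact le_max_left _ _
end

section
/- Fix n ≥ 1 and for j = 0,…,n−1 let π_{j/n} be non-zero measures on [j/n,∞), each with a possible atom at j/n and a non-increasing Lebesgue density on (j/n,∞). Define α_j recursively by (α₀π₀ + α₁π_{1/n} + … + α_jπ_{j/n})([j/n,(j+1)/n)) = 1/n. Then α_j ≥ 0 for all j. -/
open MeasureTheory
open scoped ENNReal

lemma shift_lint13 (g : ℝ → ℝ≥0∞) (a b c : ℝ) :
    ∫⁻ t in Set.Ioo (a+c) (b+c), g t = ∫⁻ t in Set.Ioo a b, g (t + c) := by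
  have hpre : (· + c) ⁻¹' (Set.Ioo (a+c) (b+c)) = Set.Ioo a b := by
    ext x; simp only [Set.mem_preimage, Set.mem_Ioo]
    constructor <;> intro h <;> exact ⟨by linarith [h.1], by linarith [h.2]⟩
  have h1 : (volume : Measure ℝ).restrict (Set.Ioo (a+c) (b+c))
      = Measure.map (Homeomorph.addRight c).toMeasurableEquiv (volume.restrict (Set.Ioo a b)) := by
    conv_lhs => rw [← map_add_right_eq_self (volume : Measure ℝ) c]
    rw [Measure.restrict_map (by fun_prop) measurableSet_Ioo]
    show _ = Measure.map (· + c) _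
    rw [hpre]
  rw [h1, lintegral_map_equiv]
  rfl

/-- Positivity: a nonzero measure supported on `[a,∞)` with non-increasing density on
`(a,∞)` charges `[a,b)` for any `b > a`. -/
lemma pos_meas13 (π : Measure ℝ) (a b : ℝ) (hab : a < b) (hne : π ≠ 0)
    (hsupp : π (Set.Iio a) = 0)
    (g : ℝ → ℝ≥0∞) (hmono : ∀ s t : ℝ, a < s → s ≤ t → g t ≤ g s)
    (hg : ∀ E : Set ℝ, MeasurableSet E → E ⊆ Set.Ioi a → π E = ∫⁻ t in E, g t) :
    π (Set.Ico a b) ≠ 0 := by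
  intro h0
  set s : ℝ := (a + b) / 2 with hs
  have has : a < s := by simp only [hs]; linarith
  have hsb : s < b := by simp only [hs]; linarith
  by_cases hgs : g s = 0
  · -- then π = 0, contradiction
    have h2 : π (Set.Ioi s) = 0 := by
      rw [hg _ measurableSet_Ioi (fun x hx => lt_trans has hx)]
      have hle : ∫⁻ t in Set.Ioi s, g t ≤ ∫⁻ t in Set.Ioi s, (0 : ℝ≥0∞) :=
        lintegral_mono_ae ((ae_restrict_mem measurableSet_Ioi).mono
          (fun x hx => by
            have := hmono s x has (le_of_lt hx)
            simpa [hgs] using this))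
      simpa using hle
    have huniv : π Set.univ = 0 := by
      have hsub : (Set.univ : Set ℝ) ⊆ Set.Iio a ∪ (Set.Ico a b ∪ Set.Ioi s) := by
        intro x _
        by_cases hx : x < a
        · exact Or.inl (Set.mem_Iio.mpr hx)
        · right
          by_cases hx2 : x < b
          · exact Or.inl (Set.mem_Ico.mpr ⟨le_of_not_gt hx, hx2⟩)
          · exact Or.inr (Set.mem_Ioi.mpr (lt_of_lt_of_le hsb (le_of_not_gt hx2)))
      have h3 : π Set.univ ≤ π (Set.Iio a) + (π (Set.Ico a b) + π (Set.Ioi s)) :=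
        calc π Set.univ ≤ π (Set.Iio a ∪ (Set.Ico a b ∪ Set.Ioi s)) := measure_mono hsub
          _ ≤ π (Set.Iio a) + π (Set.Ico a b ∪ Set.Ioi s) := measure_union_le _ _
          _ ≤ π (Set.Iio a) + (π (Set.Ico a b) + π (Set.Ioi s)) :=
            add_le_add le_rfl (measure_union_le _ _)
      rw [hsupp, h0, h2] at h3
      simpa using h3
    exact hne (Measure.measure_univ_eq_zero.mp huniv)
  · -- then π (Ioo a s) > 0, contradicting h0
    have hIoo : π (Set.Ioo a s) = 0 :=
      measure_mono_null (fun x hx => by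
        have h := Set.mem_Ioo.mp hx
        exact Set.mem_Ico.mpr ⟨le_of_lt h.1, lt_trans h.2 hsb⟩) h0
    rw [hg _ measurableSet_Ioo (fun x hx => hx.1)] at hIoo
    have hge : ∫⁻ t in Set.Ioo a s, g s ≤ ∫⁻ t in Set.Ioo a s, g t :=
      lintegral_mono_ae ((ae_restrict_mem measurableSet_Ioo).mono
        (fun x hx => hmono x s hx.1 (le_of_lt hx.2)))
    rw [hIoo, lintegral_const, Measure.restrict_apply MeasurableSet.univ,
      Set.univ_inter, Real.volume_Ioo, nonpos_iff_eq_zero, mul_eq_zero] at hge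
    rcases hge with h | h
    · exact hgs h
    · rw [ENNReal.ofReal_eq_zero] at h; linarith

/-- Right-shift comparison for measures with non-increasing density. -/
lemma step13 (π : Measure ℝ) (a u c : ℝ) (hc : 0 < c) (hau : a ≤ u)
    (g : ℝ → ℝ≥0∞) (hmono : ∀ s t : ℝ, a < s → s ≤ t → g t ≤ g s)
    (hg : ∀ E : Set ℝ, MeasurableSet E → E ⊆ Set.Ioi a → π E = ∫⁻ t in E, g t) :
    π (Set.Ico (u + c) (u + c + c)) ≤ π (Set.Ico u (u + c)) := by
  calc π (Set.Ico (u + c) (u + c + c))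
      = ∫⁻ t in Set.Ico (u+c) (u+c+c), g t :=
        hg _ measurableSet_Ico (fun x hx => Set.mem_Ioi.mpr (by have := hx.1; linarith))
    _ = ∫⁻ t in Set.Ioo (u+c) (u+c+c), g t := by
        rw [Measure.restrict_congr_set Ioo_ae_eq_Ico]
    _ = ∫⁻ t in Set.Ioo u (u+c), g (t + c) := shift_lint13 g u (u+c) c
    _ ≤ ∫⁻ t in Set.Ioo u (u+c), g t :=
        lintegral_mono_ae ((ae_restrict_mem measurableSet_Ioo).mono
          (fun x hx => hmono x (x + c) (lt_of_le_of_lt hau hx.1) (by linarith)))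
    _ = π (Set.Ioo u (u+c)) :=
        (hg _ measurableSet_Ioo (fun x hx => lt_of_le_of_lt hau hx.1)).symm
    _ ≤ π (Set.Ico u (u+c)) := measure_mono Set.Ioo_subset_Ico_self

/-- Fix `n ≥ 1` and for `j < n` let `π j` be non-zero measures on
`[j/n,∞)`, each with a possible atom at `j/n` and a non-increasing Lebesgue density on
`(j/n,∞)`. If `α j` satisfy the recursion
`∑_{i ≤ j} α i · π i ([j/n,(j+1)/n)) = 1/n` for all `j < n`, then `α j ≥ 0` for all
`j < n`. -/
theorem statement13 (n : ℕ) (hn : 1 ≤ n) (π : ℕ → Measure ℝ)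
    (hne : ∀ j < n, π j ≠ 0)
    (hloc : ∀ j < n, IsLocallyFiniteMeasure (π j))
    (hsupp : ∀ j < n, π j (Set.Iio ((j : ℝ) / n)) = 0)
    (hdens : ∀ j < n, ∃ g : ℝ → ℝ≥0∞,
      (∀ s t : ℝ, (j : ℝ) / n < s → s ≤ t → g t ≤ g s) ∧
      (∀ E : Set ℝ, MeasurableSet E → E ⊆ Set.Ioi ((j : ℝ) / n) →
        π j E = ∫⁻ t in E, g t))
    (α : ℕ → ℝ)
    (hα : ∀ j < n, ∑ i ∈ Finset.range (j + 1),
      α i * (π i (Set.Ico ((j : ℝ) / n) (((j : ℝ) + 1) / n))).toReal = 1 / n) :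
    ∀ j < n, 0 ≤ α j := by
  have hn' : (0:ℝ) < n := by exact_mod_cast Nat.lt_of_lt_of_le Nat.zero_lt_one hn
  have hinv : (0:ℝ) < 1 / n := by positivity
  -- finiteness of all relevant measures
  have hfin : ∀ i < n, ∀ x y : ℝ, π i (Set.Ico x y) ≠ ⊤ := by
    intro i hi x y
    haveI := hloc i hi
    exact ne_top_of_le_ne_top (isCompact_Icc (a := x) (b := y)).measure_lt_top.ne
      (measure_mono Set.Ico_subset_Icc_self)
  -- positivity of diagonal measures
  have hpos : ∀ j < n, π j (Set.Ico ((j:ℝ)/n) (((j:ℝ)+1)/n)) ≠ 0 := by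
    intro j hj
    obtain ⟨g, hmono, hg⟩ := hdens j hj
    have hab : (j:ℝ)/n < ((j:ℝ)+1)/n := by
      rw [div_lt_div_iff₀ hn' hn']; nlinarith
    exact pos_meas13 (π j) _ _ hab (hne j hj) (hsupp j hj) g hmono hg
  intro j
  induction j using Nat.strong_induction_on with
  | _ j IH =>
    intro hj
    match j with
    | 0 =>
      have h := hα 0 hj
      simp only [zero_add, Finset.sum_range_one] at h
      obtain ⟨m, hm0, hmeq⟩ : ∃ m : ℝ, 0 ≤ m ∧ α 0 * m = 1 / n :=
        ⟨_, ENNReal.toReal_nonneg, h⟩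
      nlinarith
    | Nat.succ k =>
      have hk : k < n := Nat.lt_of_succ_lt hj
      have h1 := hα (k+1) hj
      have h0 := hα k hk
      rw [Finset.sum_range_succ] at h1
      -- the comparison of sums
      have hsum : ∑ i ∈ Finset.range (k+1),
          α i * (π i (Set.Ico (((k+1:ℕ):ℝ) / n) ((((k+1:ℕ):ℝ) + 1) / n))).toReal
          ≤ ∑ i ∈ Finset.range (k+1),
          α i * (π i (Set.Ico ((k:ℝ) / n) (((k:ℝ) + 1) / n))).toReal := by
        apply Finset.sum_le_sum
        intro i hi
        have hik : i ≤ k := Nat.lt_succ_iff.mp (Finset.mem_range.mp hi)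
        have hin : i < n := lt_of_le_of_lt hik hk
        have hαi : 0 ≤ α i := IH i (Nat.lt_succ_of_le hik) hin
        have hmeas : π i (Set.Ico (((k+1:ℕ):ℝ) / n) ((((k+1:ℕ):ℝ) + 1) / n))
            ≤ π i (Set.Ico ((k:ℝ) / n) (((k:ℝ) + 1) / n)) := by
          obtain ⟨g, hmono, hg⟩ := hdens i hin
          have e1 : ((k+1:ℕ):ℝ)/n = (k:ℝ)/n + 1/n := by push_cast; ring
          have e2 : (((k+1:ℕ):ℝ)+1)/n = (k:ℝ)/n + 1/n + 1/n := by push_cast; ring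
          have e3 : ((k:ℝ)+1)/n = (k:ℝ)/n + 1/n := by ring
          rw [e1, e2, e3]
          have hau : (i:ℝ)/n ≤ (k:ℝ)/n := by
            have hik' : (i:ℝ) ≤ (k:ℝ) := by exact_mod_cast hik
            gcongr
          exact step13 (π i) ((i:ℝ)/n) ((k:ℝ)/n) (1/n) hinv hau g hmono hg
        exact mul_le_mul_of_nonneg_left
          (ENNReal.toReal_mono (hfin i hin _ _) hmeas) hαi
      have hprod : 0 ≤ α (k+1) *
          (π (k+1) (Set.Ico (((k+1:ℕ):ℝ) / n) ((((k+1:ℕ):ℝ) + 1) / n))).toReal := by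
        linarith [h1, h0, hsum]
      have hMpos : 0 < (π (k+1) (Set.Ico (((k+1:ℕ):ℝ) / n) ((((k+1:ℕ):ℝ) + 1) / n))).toReal :=
        ENNReal.toReal_pos (hpos (k+1) hj) (hfin (k+1) hj _ _)
      exact le_of_mul_le_mul_right (by simpa using hprod) hMpos
end

section
/- Let f : ℝᵈ → ℝ be smooth, non-negative, supported in a ball of radius R > 0, and let 0 < r ≤ R. Then for all x, the quantity σ²Δf(x) + ∫_{ℝᵈ}(f(x+z) − f(x) − z·∇f(x) 1_{B(0,1)}(z)) ν(z) dz is at most c(d) ‖f''‖_∞ r² K(r) + ‖f‖_∞ (L(r) − L(R+r)), where ‖f''‖_∞ is the maximum supremum norm of second partial derivatives. -/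
open MeasureTheory Metric Set
open scoped ENNReal

variable {d : ℕ}



lemma nu_meas (hd : 1 ≤ d) (ν : EuclideanSpace ℝ (Fin d) → ℝ)
    (hrad : ∀ x y : EuclideanSpace ℝ (Fin d), ‖x‖ = ‖y‖ → ν x = ν y)
    (hmono : ∀ x y : EuclideanSpace ℝ (Fin d), ‖x‖ ≤ ‖y‖ → ν y ≤ ν x) :
    Measurable ν := by
  set e : EuclideanSpace ℝ (Fin d) := EuclideanSpace.single (⟨0, hd⟩ : Fin d) (1:ℝ) with he
  have hne : ‖e‖ = 1 := by simp [he]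
  have hnorm : ∀ t : ℝ, ‖(max t 0) • e‖ = max t 0 := by
    intro t
    rw [norm_smul, hne, mul_one, Real.norm_eq_abs, abs_of_nonneg (le_max_right t 0)]
  have hanti : Antitone (fun t : ℝ => ν ((max t 0) • e)) := by
    intro s t hst
    exact hmono _ _ (by rw [hnorm, hnorm]; exact max_le_max hst le_rfl)
  have : ν = (fun t : ℝ => ν ((max t 0) • e)) ∘ (fun z : EuclideanSpace ℝ (Fin d) => ‖z‖) := by
    funext z
    exact hrad z _ (by rw [hnorm]; exact (max_eq_left (norm_nonneg z)).symm)
  rw [this]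
  exact hanti.measurable.comp measurable_norm



lemma pow_add_pow_le_add_pow (hd : 1 ≤ d) {a b : ℝ} (ha : 0 ≤ a) (hb : 0 ≤ b) :
    a ^ d + b ^ d ≤ (a + b) ^ d := by
  obtain ⟨n, rfl⟩ : ∃ n, d = n + 1 := ⟨d - 1, (Nat.succ_pred_eq_of_pos hd).symm⟩
  have h1 : a ^ (n+1) ≤ a * (a+b) ^ n := by
    rw [pow_succ']
    exact mul_le_mul_of_nonneg_left (pow_le_pow_left₀ ha (by linarith) n) ha
  have h2 : b ^ (n+1) ≤ b * (a+b) ^ n := by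
    rw [pow_succ']
    exact mul_le_mul_of_nonneg_left (pow_le_pow_left₀ hb (by linarith) n) hb
  calc a ^ (n+1) + b ^ (n+1) ≤ (a + b) * (a+b) ^ n := by linarith
    _ = (a+b) ^ (n+1) := (pow_succ' _ _).symm

lemma rearrange (hd : 1 ≤ d) (ν : EuclideanSpace ℝ (Fin d) → ℝ) (hnn : ∀ z, 0 ≤ ν z)
    (hmono : ∀ x y : EuclideanSpace ℝ (Fin d), ‖x‖ ≤ ‖y‖ → ν y ≤ ν x)
    (hmeas : Measurable ν)
    (y : EuclideanSpace ℝ (Fin d)) {R r : ℝ} (hr : 0 < r) (hR : 0 < R)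
    (hint : IntegrableOn ν (ball (0 : EuclideanSpace ℝ (Fin d)) r)ᶜ) :
    ∫ z in ball y R \ ball (0 : EuclideanSpace ℝ (Fin d)) r, ν z
      ≤ ∫ z in ball (0 : EuclideanSpace ℝ (Fin d)) (R + r) \ ball 0 r, ν z := by
  haveI : Nontrivial (EuclideanSpace ℝ (Fin d)) := by
    apply Module.nontrivial_of_finrank_pos (R := ℝ)
    rw [finrank_euclideanSpace_fin]; exact hd
  set S₁ : Set (EuclideanSpace ℝ (Fin d)) := ball y R \ ball 0 r with hS₁
  set S₂ : Set (EuclideanSpace ℝ (Fin d)) := ball 0 (R + r) \ ball 0 r with hS₂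
  have hmS₁ : MeasurableSet S₁ := measurableSet_ball.diff measurableSet_ball
  have hmS₂ : MeasurableSet S₂ := measurableSet_ball.diff measurableSet_ball
  have hsub₁ : S₁ ⊆ (ball (0:EuclideanSpace ℝ (Fin d)) r)ᶜ := fun z hz => hz.2
  have hsub₂ : S₂ ⊆ (ball (0:EuclideanSpace ℝ (Fin d)) r)ᶜ := fun z hz => hz.2
  have hint₁ : IntegrableOn ν S₁ := hint.mono_set hsub₁
  have hint₂ : IntegrableOn ν S₂ := hint.mono_set hsub₂
  -- per-level inequality
  have key : ∀ t : ℝ, volume ({a : EuclideanSpace ℝ (Fin d) | t < ν a} ∩ S₁) ≤ volume ({a : EuclideanSpace ℝ (Fin d) | t < ν a} ∩ S₂) := by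
    intro t
    set U := {a : EuclideanSpace ℝ (Fin d) | t < ν a} with hU
    by_cases hc : ∀ z ∈ U ∩ S₁, z ∈ ball (0:EuclideanSpace ℝ (Fin d)) (R + r)
    · apply measure_mono
      rintro z ⟨hzU, hz₁⟩
      exact ⟨hzU, hc z ⟨hzU, hz₁⟩, hz₁.2⟩
    · push_neg at hc
      obtain ⟨z₀, hz₀, hz₀b⟩ := hc
      have hz₀n : R + r ≤ ‖z₀‖ := by
        simpa [dist_zero_right] using hz₀b
      have hz₀U : t < ν z₀ := hz₀.1
      have hUb : ball (0:EuclideanSpace ℝ (Fin d)) (R + r) ⊆ U := by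
        intro w hw
        have hw' : ‖w‖ ≤ ‖z₀‖ := le_trans (le_of_lt (by simpa [dist_zero_right] using hw)) hz₀n
        exact lt_of_lt_of_le hz₀U (hmono w z₀ hw')
      have hUS₂ : U ∩ S₂ = S₂ := inter_eq_self_of_subset_right fun z hz => hUb hz.1
      rw [hUS₂]
      have hball : volume (ball y R) + volume (ball (0:EuclideanSpace ℝ (Fin d)) r) ≤ volume (ball (0:EuclideanSpace ℝ (Fin d)) (R + r)) := by
        rw [Measure.addHaar_ball volume y hR.le, Measure.addHaar_ball volume (0:EuclideanSpace ℝ (Fin d)) hr.le,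
          Measure.addHaar_ball volume (0:EuclideanSpace ℝ (Fin d)) (by linarith : (0:ℝ) ≤ R + r),
          finrank_euclideanSpace_fin, ← add_mul, ← ENNReal.ofReal_add (by positivity) (by positivity)]
        exact mul_le_mul_left (ENNReal.ofReal_le_ofReal
          (pow_add_pow_le_add_pow hd hR.le hr.le)) _
      have hsplit : volume (ball (0:EuclideanSpace ℝ (Fin d)) (R + r)) = volume S₂ + volume (ball (0:EuclideanSpace ℝ (Fin d)) r) := by
        rw [← measure_union (disjoint_sdiff_left) measurableSet_ball,
          diff_union_of_subset (ball_subset_ball (by linarith))]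
      have h1 : volume (U ∩ S₁) ≤ volume (ball y R) :=
        measure_mono (fun z hz => hz.2.1)
      have h2 : volume (ball y R) ≤ volume S₂ := by
        rw [hsplit] at hball
        exact ENNReal.le_of_add_le_add_right (measure_ball_lt_top.ne) hball
      exact le_trans h1 h2
  -- layer cake on both sides
  have layer : ∀ (S : Set (EuclideanSpace ℝ (Fin d))), MeasurableSet S →
      ∫⁻ z in S, ENNReal.ofReal (ν z) = ∫⁻ t in Ioi (0:ℝ), volume ({a : EuclideanSpace ℝ (Fin d) | t < ν a} ∩ S) := by
    intro S hS
    rw [lintegral_eq_lintegral_meas_lt (volume.restrict S)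
      (Filter.Eventually.of_forall hnn) hmeas.aemeasurable]
    apply lintegral_congr_ae
    filter_upwards with t
    rw [Measure.restrict_apply (measurableSet_lt measurable_const hmeas)]
  have hlin : ∫⁻ z in S₁, ENNReal.ofReal (ν z) ≤ ∫⁻ z in S₂, ENNReal.ofReal (ν z) := by
    rw [layer S₁ hmS₁, layer S₂ hmS₂]
    exact lintegral_mono fun t => key t
  have e₁ : ENNReal.ofReal (∫ z in S₁, ν z) = ∫⁻ z in S₁, ENNReal.ofReal (ν z) :=
    ofReal_integral_eq_lintegral_ofReal hint₁ (Filter.Eventually.of_forall hnn)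
  have e₂ : ENNReal.ofReal (∫ z in S₂, ν z) = ∫⁻ z in S₂, ENNReal.ofReal (ν z) :=
    ofReal_integral_eq_lintegral_ofReal hint₂ (Filter.Eventually.of_forall hnn)
  rw [← ENNReal.ofReal_le_ofReal_iff (integral_nonneg (fun z => hnn z)), e₁, e₂]
  exact hlin

lemma odd_integral (S : Set (EuclideanSpace ℝ (Fin d))) (hSm : MeasurableSet S)
    (hsym : ∀ z : EuclideanSpace ℝ (Fin d), z ∈ S ↔ -z ∈ S)
    (φ : EuclideanSpace ℝ (Fin d) → ℝ)
    (hodd : ∀ z, φ (-z) = -φ z) :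
    ∫ z in S, φ z = 0 := by
  have h1 : ∫ z in S, φ z = ∫ z, S.indicator φ z := (integral_indicator hSm).symm
  have h2 : ∫ z, S.indicator φ z = ∫ z, S.indicator φ (-z) :=
    (integral_neg_eq_self (S.indicator φ) volume).symm
  have h3 : ∀ z, S.indicator φ (-z) = - S.indicator φ z := by
    intro z
    by_cases hz : z ∈ S
    · rw [indicator_of_mem ((hsym z).mp hz), indicator_of_mem hz, hodd]
    · have hz' : -z ∉ S := fun h => hz (by simpa using (hsym (-z)).mp h)
      rw [indicator_of_notMem hz', indicator_of_notMem hz, neg_zero]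
  have h4 : ∫ z, S.indicator φ (-z) = - ∫ z, S.indicator φ z := by
    simp_rw [h3]; exact integral_neg _
  have := h2.trans h4
  linarith [h1, this]

lemma euclid_coord_le (v : EuclideanSpace ℝ (Fin d)) (i : Fin d) : |v i| ≤ ‖v‖ := by
  have h := abs_real_inner_le_norm (EuclideanSpace.single i (1:ℝ)) v
  rw [EuclideanSpace.inner_single_left, EuclideanSpace.norm_single] at h
  simpa using h

lemma euclid_sum_single (v : EuclideanSpace ℝ (Fin d)) :
    v = ∑ i, v i • EuclideanSpace.single i (1:ℝ) := by
  ext j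
  rw [WithLp.ofLp_sum, Finset.sum_apply]
  simp_rw [PiLp.smul_apply, EuclideanSpace.single_apply, smul_eq_mul, mul_ite, mul_one, mul_zero]
  rw [Finset.sum_ite_eq Finset.univ j (fun i => v i)]
  simp

lemma bilin_bound (B : EuclideanSpace ℝ (Fin d) →L[ℝ] EuclideanSpace ℝ (Fin d) →L[ℝ] ℝ)
    (M2 : ℝ) (hM2 : 0 ≤ M2)
    (hB : ∀ i j : Fin d, |B (EuclideanSpace.single i 1) (EuclideanSpace.single j 1)| ≤ M2)
    (v w : EuclideanSpace ℝ (Fin d)) : |B v w| ≤ (d:ℝ)^2 * M2 * ‖v‖ * ‖w‖ := by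
  have happ : ∀ (T : EuclideanSpace ℝ (Fin d) →L[ℝ] ℝ) (u : EuclideanSpace ℝ (Fin d)),
      T u = ∑ j, u j * T (EuclideanSpace.single j 1) := by
    intro T u
    conv_lhs => rw [euclid_sum_single u]
    rw [map_sum]
    simp [_root_.map_smul]
  have hBv : ∀ u : EuclideanSpace ℝ (Fin d),
      B v u = ∑ i, v i * B (EuclideanSpace.single i 1) u := by
    intro u
    conv_lhs => rw [euclid_sum_single v]
    rw [map_sum, ContinuousLinearMap.sum_apply]
    simp [_root_.map_smul]
  have hv : B v w = ∑ j, ∑ i, v i * w j *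
      B (EuclideanSpace.single i 1) (EuclideanSpace.single j 1) := by
    rw [happ (B v) w]
    refine Finset.sum_congr rfl fun j _ => ?_
    rw [hBv, Finset.mul_sum]
    exact Finset.sum_congr rfl fun i _ => by ring
  rw [hv]
  calc |∑ j, ∑ i, v i * w j * B (EuclideanSpace.single i 1) (EuclideanSpace.single j 1)|
      ≤ ∑ j, |∑ i, v i * w j * B (EuclideanSpace.single i 1) (EuclideanSpace.single j 1)| :=
        Finset.abs_sum_le_sum_abs _ _
    _ ≤ ∑ j : Fin d, ∑ i : Fin d, |v i| * |w j| * M2 := by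
        refine Finset.sum_le_sum fun j _ => le_trans (Finset.abs_sum_le_sum_abs _ _) ?_
        refine Finset.sum_le_sum fun i _ => ?_
        rw [abs_mul, abs_mul]
        exact mul_le_mul_of_nonneg_left (hB i j) (by positivity)
    _ ≤ ∑ j : Fin d, ∑ i : Fin d, ‖v‖ * ‖w‖ * M2 := by
        refine Finset.sum_le_sum fun j _ => Finset.sum_le_sum fun i _ => ?_
        have : |v i| * |w j| ≤ ‖v‖ * ‖w‖ :=
          mul_le_mul (euclid_coord_le v i) (euclid_coord_le w j) (abs_nonneg _) (norm_nonneg _)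
        exact mul_le_mul_of_nonneg_right this hM2
    _ = (d:ℝ)^2 * M2 * ‖v‖ * ‖w‖ := by
        simp [Finset.sum_const, Finset.card_univ]
        ring

lemma taylor_bound (f : EuclideanSpace ℝ (Fin d) → ℝ) (hf : ContDiff ℝ (⊤ : ℕ∞) f) (M2 : ℝ)
    (hM2nn : 0 ≤ M2)
    (hM2 : ∀ (u : EuclideanSpace ℝ (Fin d)) (i j : Fin d),
      |iteratedFDeriv ℝ 2 f u ![EuclideanSpace.single i 1, EuclideanSpace.single j 1]| ≤ M2)
    (x z : EuclideanSpace ℝ (Fin d)) :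
    |f (x + z) - f x - fderiv ℝ f x z| ≤ (d:ℝ)^2 * M2 * ‖z‖^2 := by
  set C : ℝ := (d:ℝ)^2 * M2 with hC
  have hCnn : 0 ≤ C := by positivity
  have hdf : ContDiff ℝ (⊤ : ℕ∞) (fderiv ℝ f) := hf.fderiv_right (by simp)
  have hess : ∀ u : EuclideanSpace ℝ (Fin d), ‖fderiv ℝ (fderiv ℝ f) u‖ ≤ C := by
    intro u
    apply ContinuousLinearMap.opNorm_le_bound _ hCnn
    intro v
    apply ContinuousLinearMap.opNorm_le_bound _ (by positivity)
    intro w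
    have hent : ∀ i j : Fin d,
        |fderiv ℝ (fderiv ℝ f) u (EuclideanSpace.single i 1) (EuclideanSpace.single j 1)| ≤ M2 := by
      intro i j
      have h2 := iteratedFDeriv_two_apply (𝕜 := ℝ) f u
        ![EuclideanSpace.single i (1:ℝ), EuclideanSpace.single j 1]
      simp only [Matrix.cons_val_zero, Matrix.cons_val_one, Matrix.head_cons] at h2
      rw [← h2]
      exact hM2 u i j
    have := bilin_bound (fderiv ℝ (fderiv ℝ f) u) M2 hM2nn hent v w
    rw [Real.norm_eq_abs]
    calc |fderiv ℝ (fderiv ℝ f) u v w| ≤ (d:ℝ)^2 * M2 * ‖v‖ * ‖w‖ := this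
      _ = C * ‖v‖ * ‖w‖ := by rw [hC]
  have gradlip : ∀ u v : EuclideanSpace ℝ (Fin d),
      ‖fderiv ℝ f u - fderiv ℝ f v‖ ≤ C * ‖u - v‖ := by
    intro u v
    exact convex_univ.norm_image_sub_le_of_norm_fderiv_le
      (fun w _ => hdf.differentiable (by simp) w)
      (fun w _ => hess w) (Set.mem_univ v) (Set.mem_univ u)
  set g : EuclideanSpace ℝ (Fin d) → ℝ := fun w => f (x + w) - fderiv ℝ f x w with hg
  have hgd : ∀ w : EuclideanSpace ℝ (Fin d),
      HasFDerivAt g (fderiv ℝ f (x + w) - fderiv ℝ f x) w := by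
    intro w
    have h1 : HasFDerivAt (fun w => f (x + w)) (fderiv ℝ f (x + w)) w := by
      have := ((hf.differentiable (by simp)) (x + w)).hasFDerivAt
      have hcomp := this.comp w ((hasFDerivAt_id w).const_add x)
      exact hcomp.congr_fderiv (by simp)
    exact h1.sub ((fderiv ℝ f x).hasFDerivAt)
  have key : ‖g z - g 0‖ ≤ C * ‖z‖ * ‖z - 0‖ := by
    apply Convex.norm_image_sub_le_of_norm_hasFDerivWithin_le
      (f' := fun w => fderiv ℝ f (x + w) - fderiv ℝ f x)
      (fun w _ => (hgd w).hasFDerivWithinAt) ?_ (convex_closedBall _ _)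
      (mem_closedBall_self (norm_nonneg z)) ?_
    · intro w hw
      calc ‖fderiv ℝ f (x + w) - fderiv ℝ f x‖ ≤ C * ‖(x + w) - x‖ := gradlip _ _
        _ = C * ‖w‖ := by rw [add_sub_cancel_left]
        _ ≤ C * ‖z‖ := by
            apply mul_le_mul_of_nonneg_left _ hCnn
            simpa [dist_zero_right] using hw
    · simp [mem_closedBall, dist_zero_right]
  have hg0 : g 0 = f x := by simp [hg]
  have hgz : g z = f (x + z) - fderiv ℝ f x z := rfl
  rw [hg0, hgz, sub_zero] at key
  rw [Real.norm_eq_abs] at key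
  calc |f (x + z) - f x - fderiv ℝ f x z| = |f (x + z) - fderiv ℝ f x z - f x| := by ring_nf
    _ ≤ C * ‖z‖ * ‖z‖ := key
    _ = (d:ℝ)^2 * M2 * ‖z‖^2 := by rw [hC]; ring
section main


set_option maxHeartbeats 2000000


/-- Lemma 2.1: For smooth non-negative `f` supported in a ball of radius
`R`, and `0 < r ≤ R`, the generator
`σ²Δf(x) + ∫ (f(x+z) − f(x) − z·∇f(x) 1_{B(0,1)}(z)) ν(z) dz` is bounded above by
`c(d) ‖f''‖_∞ r² K(r) + ‖f‖_∞ (L(r) − L(R+r))`. Here `Mf` and `M2` bound `|f|` and the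
entries of the Hessian of `f`, respectively. -/
theorem statement14 (d : ℕ) (hd : 1 ≤ d) :
    ∃ c : ℝ, 0 < c ∧
      ∀ (σ2 : ℝ), 0 ≤ σ2 →
      ∀ ν : EuclideanSpace ℝ (Fin d) → ℝ, (∀ z, 0 ≤ ν z) →
      (∀ x y : EuclideanSpace ℝ (Fin d), ‖x‖ = ‖y‖ → ν x = ν y) →
      (∀ x y : EuclideanSpace ℝ (Fin d), ‖x‖ ≤ ‖y‖ → ν y ≤ ν x) →
      Integrable (fun z : EuclideanSpace ℝ (Fin d) => min (‖z‖ ^ 2) 1 * ν z) →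
      ∀ K L : ℝ → ℝ,
      (∀ r : ℝ, 0 < r →
        K r = σ2 * d / r ^ 2 +
          ∫ z in ball (0 : EuclideanSpace ℝ (Fin d)) r, ‖z‖ ^ 2 / r ^ 2 * ν z) →
      (∀ r : ℝ, 0 < r →
        L r = ∫ z in (ball (0 : EuclideanSpace ℝ (Fin d)) r)ᶜ, ν z) →
      ∀ f : EuclideanSpace ℝ (Fin d) → ℝ, ContDiff ℝ (⊤ : ℕ∞) f → (∀ x, 0 ≤ f x) →
      ∀ (x0 : EuclideanSpace ℝ (Fin d)) (R : ℝ), 0 < R → tsupport f ⊆ ball x0 R →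
      ∀ r : ℝ, 0 < r → r ≤ R →
      ∀ Mf M2 : ℝ, (∀ x, |f x| ≤ Mf) →
      (∀ (x : EuclideanSpace ℝ (Fin d)) (i j : Fin d),
        |iteratedFDeriv ℝ 2 f x ![EuclideanSpace.single i 1, EuclideanSpace.single j 1]|
          ≤ M2) →
      ∀ x : EuclideanSpace ℝ (Fin d),
        σ2 * (∑ i : Fin d, iteratedFDeriv ℝ 2 f x
            ![EuclideanSpace.single i 1, EuclideanSpace.single i 1]) +
          ∫ z : EuclideanSpace ℝ (Fin d),
            (f (x + z) - f x -
              (ball (0 : EuclideanSpace ℝ (Fin d)) 1).indicator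
                (fun w => fderiv ℝ f x w) z) * ν z
        ≤ c * (M2 * r ^ 2 * K r) + Mf * (L r - L (R + r)) := by
  refine ⟨(d:ℝ)^2, by positivity, ?_⟩
  intro σ2 hσ2 ν hνnn hrad hmono hνint K L hK hL f hf hfnn x0 R hR hsupp r hr hrR Mf M2 hMf hM2 x
  have hd1 : (1:ℝ) ≤ (d:ℝ) := by exact_mod_cast hd
  have hmeas : Measurable ν := nu_meas hd ν hrad hmono
  have hMfnn : 0 ≤ Mf := le_trans (abs_nonneg _) (hMf x)
  have hM2nn : 0 ≤ M2 := le_trans (abs_nonneg _) (hM2 x ⟨0, hd⟩ ⟨0, hd⟩)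
  set A : Set (EuclideanSpace ℝ (Fin d)) := ball 0 r with hA
  set B2 : Set (EuclideanSpace ℝ (Fin d)) := ball 0 (R + r) with hB2
  have hmA : MeasurableSet A := measurableSet_ball
  set ind : EuclideanSpace ℝ (Fin d) → ℝ :=
    (ball (0 : EuclideanSpace ℝ (Fin d)) 1).indicator (fun w => fderiv ℝ f x w) with hind
  set F : EuclideanSpace ℝ (Fin d) → ℝ := fun z => (f (x + z) - f x - ind z) * ν z with hF
  set Tay : EuclideanSpace ℝ (Fin d) → ℝ := fun z => f (x + z) - f x - fderiv ℝ f x z with hTay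
  have hindm : Measurable ind :=
    ((fderiv ℝ f x).continuous.measurable).indicator measurableSet_ball
  have hfc : Continuous f := hf.continuous
  -- integrability of ‖z‖^2 ν on A
  have i1 : IntegrableOn (fun z => ‖z‖^2 * ν z) A := by
    apply Integrable.mono' ((hνint.const_mul (max 1 (r^2))).restrict (s := A))
    · exact ((measurable_norm.pow_const 2).mul hmeas).aestronglyMeasurable
    · refine (ae_restrict_iff' hmA).2 (Filter.Eventually.of_forall fun z hz => ?_)
      have hzr : ‖z‖ < r := by simpa [hA, mem_ball, dist_zero_right] using hz
      rw [Real.norm_eq_abs,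
        abs_of_nonneg (mul_nonneg (pow_nonneg (norm_nonneg z) 2) (hνnn z))]
      rcases le_or_gt (‖z‖^2) 1 with h1 | h1
      · rw [min_eq_left h1]
        exact le_mul_of_one_le_left (mul_nonneg (pow_nonneg (norm_nonneg z) 2) (hνnn z))
          (le_max_left 1 (r^2))
      · rw [min_eq_right h1.le, one_mul]
        have hzz : ‖z‖^2 ≤ r^2 := by nlinarith [norm_nonneg z]
        exact mul_le_mul_of_nonneg_right (hzz.trans (le_max_right 1 (r^2))) (hνnn z)
  -- integrability of ν outside small balls
  have i2 : ∀ s : ℝ, 0 < s → IntegrableOn ν (ball (0 : EuclideanSpace ℝ (Fin d)) s)ᶜ := by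
    intro s hs
    apply Integrable.mono' ((hνint.const_mul (max 1 (1/s^2))).restrict)
    · exact hmeas.aestronglyMeasurable
    · refine (ae_restrict_iff' measurableSet_ball.compl).2
        (Filter.Eventually.of_forall fun z hz => ?_)
      have hzs : s ≤ ‖z‖ := by
        have := hz
        simp only [mem_compl_iff, mem_ball, dist_zero_right, not_lt] at this
        exact this
      rw [Real.norm_eq_abs, abs_of_nonneg (hνnn z)]
      rcases le_or_gt 1 (‖z‖^2) with h1 | h1
      · rw [min_eq_right h1]
        nlinarith [hνnn z, le_max_left 1 (1/s^2)]
      · rw [min_eq_left h1.le]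
        have hs2 : s^2 ≤ ‖z‖^2 := by nlinarith [norm_nonneg z]
        have h1s : ν z ≤ 1/s^2 * (‖z‖^2 * ν z) := by
          rw [div_mul_eq_mul_div, one_mul]
          rw [le_div_iff₀ (by positivity)]
          nlinarith [hνnn z]
        calc ν z ≤ 1/s^2 * (‖z‖^2 * ν z) := h1s
          _ ≤ max 1 (1/s^2) * (‖z‖^2 * ν z) :=
            mul_le_mul_of_nonneg_right (le_max_right _ _) (by nlinarith [hνnn z, sq_nonneg ‖z‖])
  have i2r : IntegrableOn ν Aᶜ := i2 r hr
  -- integrability pieces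
  have i3 : IntegrableOn (fun z => f (x + z) * ν z) Aᶜ := by
    apply Integrable.mono' (i2r.const_mul Mf)
    · exact ((hfc.comp (continuous_const.add continuous_id)).measurable.mul
        hmeas).aestronglyMeasurable
    · refine Filter.Eventually.of_forall fun z => ?_
      rw [Real.norm_eq_abs, abs_mul, abs_of_nonneg (hνnn z)]
      exact mul_le_mul_of_nonneg_right (by simpa using hMf (x + z)) (hνnn z)
  have i7 : IntegrableOn (fun z => f x * ν z) Aᶜ := i2r.const_mul (f x)
  have i4 : IntegrableOn (fun z => ind z * ν z) Aᶜ := by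
    apply Integrable.mono' (i2r.const_mul ‖fderiv ℝ f x‖)
    · exact (hindm.mul hmeas).aestronglyMeasurable
    · refine Filter.Eventually.of_forall fun z => ?_
      rw [Real.norm_eq_abs, abs_mul, abs_of_nonneg (hνnn z)]
      refine mul_le_mul_of_nonneg_right ?_ (hνnn z)
      rw [hind]
      by_cases hz1 : z ∈ ball (0 : EuclideanSpace ℝ (Fin d)) 1
      · rw [indicator_of_mem hz1]
        have hzn : ‖z‖ < 1 := by simpa [mem_ball, dist_zero_right] using hz1
        calc |fderiv ℝ f x z| ≤ ‖fderiv ℝ f x‖ * ‖z‖ := (fderiv ℝ f x).le_opNorm z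
          _ ≤ ‖fderiv ℝ f x‖ * 1 := by
              exact mul_le_mul_of_nonneg_left hzn.le (norm_nonneg _)
          _ = ‖fderiv ℝ f x‖ := mul_one _
      · rw [indicator_of_notMem hz1]
        simpa using norm_nonneg (fderiv ℝ f x)
  have i5 : IntegrableOn (fun z => Tay z * ν z) A := by
    apply Integrable.mono' (i1.const_mul ((d:ℝ)^2 * M2))
    · exact ((((hfc.comp (continuous_const.add continuous_id)).sub continuous_const).sub
        (fderiv ℝ f x).continuous).measurable.mul hmeas).aestronglyMeasurable
    · refine Filter.Eventually.of_forall fun z => ?_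
      rw [Real.norm_eq_abs, abs_mul, abs_of_nonneg (hνnn z)]
      calc |f (x + z) - f x - fderiv ℝ f x z| * ν z ≤ ((d:ℝ)^2 * M2 * ‖z‖^2) * ν z :=
            mul_le_mul_of_nonneg_right (taylor_bound f hf M2 hM2nn hM2 x z) (hνnn z)
        _ = (d:ℝ)^2 * M2 * (‖z‖^2 * ν z) := by ring
  have i6 : IntegrableOn (fun z => (fderiv ℝ f x z - ind z) * ν z) A := by
    apply Integrable.mono' ((hνint.const_mul (‖fderiv ℝ f x‖ * r)).restrict)
    · exact (((fderiv ℝ f x).continuous.measurable.sub hindm).mul hmeas).aestronglyMeasurable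
    · refine (ae_restrict_iff' hmA).2 (Filter.Eventually.of_forall fun z hz => ?_)
      have hzr : ‖z‖ < r := by simpa [hA, mem_ball, dist_zero_right] using hz
      rw [Real.norm_eq_abs, abs_mul, abs_of_nonneg (hνnn z)]
      by_cases hz1 : z ∈ ball (0 : EuclideanSpace ℝ (Fin d)) 1
      · rw [hind, indicator_of_mem hz1, sub_self, abs_zero, zero_mul]
        exact mul_nonneg (mul_nonneg (norm_nonneg _) hr.le)
          (mul_nonneg (le_min (pow_nonneg (norm_nonneg z) 2) zero_le_one) (hνnn z))
      · rw [hind, indicator_of_notMem hz1, sub_zero]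
        have hzn : 1 ≤ ‖z‖ := by
          simp only [mem_ball, dist_zero_right, not_lt] at hz1; exact hz1
        have hmin : min (‖z‖^2) 1 = 1 := min_eq_right (by nlinarith)
        rw [hmin, one_mul]
        calc |fderiv ℝ f x z| * ν z ≤ (‖fderiv ℝ f x‖ * ‖z‖) * ν z :=
              mul_le_mul_of_nonneg_right ((fderiv ℝ f x).le_opNorm z) (hνnn z)
          _ ≤ (‖fderiv ℝ f x‖ * r) * ν z := by
              refine mul_le_mul_of_nonneg_right ?_ (hνnn z)
              exact mul_le_mul_of_nonneg_left hzr.le (norm_nonneg _)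
  -- global integrability of F
  have hFA : IntegrableOn F A := by
    refine (i5.add i6).congr ?_
    refine Filter.Eventually.of_forall fun z => ?_
    simp only [hF, hTay, Pi.add_apply]
    ring
  have hFAc : IntegrableOn F Aᶜ := by
    refine ((i3.sub i7).sub i4).congr ?_
    refine Filter.Eventually.of_forall fun z => ?_
    simp only [hF, Pi.sub_apply]
    ring
  have hFint : Integrable F := by
    have := hFA.union hFAc
    rwa [union_compl_self, integrableOn_univ] at this
  -- split the integral
  have hsplit : ∫ z, F z = (∫ z in A, F z) + ∫ z in Aᶜ, F z :=
    (integral_add_compl hmA hFint).symm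
  -- inner integral
  have hInner : ∫ z in A, F z = (∫ z in A, Tay z * ν z) +
      ∫ z in A, (fderiv ℝ f x z - ind z) * ν z := by
    rw [← integral_add i5 i6]
    refine integral_congr_ae (Filter.Eventually.of_forall fun z => ?_)
    simp only [hF, hTay]; ring
  -- vanishing symmetric terms
  have hodd1 : ∫ z in A, (fderiv ℝ f x z - ind z) * ν z = 0 := by
    have heq : ∀ z, (fderiv ℝ f x z - ind z) * ν z =
        ((ball (0 : EuclideanSpace ℝ (Fin d)) 1)ᶜ).indicator
          (fun w => fderiv ℝ f x w * ν w) z := by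
      intro z
      by_cases hz1 : z ∈ ball (0 : EuclideanSpace ℝ (Fin d)) 1
      · have hz1' : z ∉ (ball (0 : EuclideanSpace ℝ (Fin d)) 1)ᶜ := by simpa using hz1
        simp [hind, indicator_of_mem hz1, indicator_of_notMem hz1']
      · have hz1' : z ∈ (ball (0 : EuclideanSpace ℝ (Fin d)) 1)ᶜ := by simpa using hz1
        simp [hind, indicator_of_notMem hz1, indicator_of_mem hz1']
    calc ∫ z in A, (fderiv ℝ f x z - ind z) * ν z
        = ∫ z in A, ((ball (0 : EuclideanSpace ℝ (Fin d)) 1)ᶜ).indicator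
            (fun w => fderiv ℝ f x w * ν w) z := by
          exact integral_congr_ae (Filter.Eventually.of_forall fun z => heq z)
      _ = ∫ z in A ∩ (ball (0 : EuclideanSpace ℝ (Fin d)) 1)ᶜ, fderiv ℝ f x z * ν z :=
          setIntegral_indicator measurableSet_ball.compl
      _ = 0 := by
          apply odd_integral _ (hmA.inter measurableSet_ball.compl)
          · intro z
            simp [hA, mem_ball, dist_zero_right, norm_neg]
          · intro z
            rw [map_neg, hrad (-z) z (norm_neg z), neg_mul]
  have hodd2 : ∫ z in Aᶜ, ind z * ν z = 0 := by
    calc ∫ z in Aᶜ, ind z * ν z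
        = ∫ z in Aᶜ, (ball (0 : EuclideanSpace ℝ (Fin d)) 1).indicator
            (fun w => fderiv ℝ f x w * ν w) z := by
          refine integral_congr_ae (Filter.Eventually.of_forall fun z => ?_)
          by_cases hz1 : z ∈ ball (0 : EuclideanSpace ℝ (Fin d)) 1
          · simp [hind, indicator_of_mem hz1]
          · simp [hind, indicator_of_notMem hz1]
      _ = ∫ z in Aᶜ ∩ ball (0 : EuclideanSpace ℝ (Fin d)) 1, fderiv ℝ f x z * ν z :=
          setIntegral_indicator measurableSet_ball
      _ = 0 := by
          apply odd_integral _ (hmA.compl.inter measurableSet_ball)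
          · intro z
            simp [hA, mem_ball, dist_zero_right, norm_neg]
          · intro z
            rw [map_neg, hrad (-z) z (norm_neg z), neg_mul]
  -- outer integral split
  have hOuter : ∫ z in Aᶜ, F z =
      (∫ z in Aᶜ, f (x + z) * ν z) - ∫ z in Aᶜ, f x * ν z := by
    have h1 : ∫ z in Aᶜ, F z = ∫ z in Aᶜ,
        (f (x + z) * ν z - f x * ν z - ind z * ν z) := by
      refine integral_congr_ae (Filter.Eventually.of_forall fun z => ?_)
      simp only [hF]; ring
    have i37 : IntegrableOn (fun z => f (x + z) * ν z - f x * ν z) Aᶜ := i3.sub i7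
    rw [h1, integral_sub i37 i4, integral_sub i3 i7, hodd2, sub_zero]
  -- bound the Taylor part
  have b1 : ∫ z in A, Tay z * ν z ≤ (d:ℝ)^2 * M2 * ∫ z in A, ‖z‖^2 * ν z := by
    rw [← integral_const_mul]
    refine setIntegral_mono_on i5 (i1.const_mul ((d:ℝ)^2 * M2)) hmA fun z hz => ?_
    calc Tay z * ν z ≤ ((d:ℝ)^2 * M2 * ‖z‖^2) * ν z :=
          mul_le_mul_of_nonneg_right
            ((le_abs_self _).trans (taylor_bound f hf M2 hM2nn hM2 x z)) (hνnn z)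
      _ = (d:ℝ)^2 * M2 * (‖z‖^2 * ν z) := by ring
  -- bound the far part using rearrangement
  set y : EuclideanSpace ℝ (Fin d) := x0 - x with hy
  have b2a : ∫ z in Aᶜ, f (x + z) * ν z ≤ Mf * ∫ z in ball y R \ A, ν z := by
    have hstep : ∫ z in Aᶜ, f (x + z) * ν z ≤
        ∫ z in Aᶜ, (ball y R).indicator (fun w => Mf * ν w) z := by
      refine setIntegral_mono_on i3 ((i2r.const_mul Mf).indicator measurableSet_ball)
        hmA.compl fun z hz => ?_
      by_cases hz1 : z ∈ ball y R
      · rw [indicator_of_mem hz1]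
        exact mul_le_mul_of_nonneg_right ((le_abs_self _).trans (hMf (x + z))) (hνnn z)
      · rw [indicator_of_notMem hz1]
        have hfz : f (x + z) = 0 := by
          apply image_eq_zero_of_notMem_tsupport
          intro hc
          apply hz1
          have := hsupp hc
          rw [mem_ball] at this ⊢
          rw [hy]
          calc dist z (x0 - x) = ‖z - (x0 - x)‖ := dist_eq_norm _ _
            _ = ‖x + z - x0‖ := by rw [show z - (x0 - x) = x + z - x0 by abel]
            _ = dist (x + z) x0 := (dist_eq_norm _ _).symm
            _ < R := this
        rw [hfz, zero_mul]
    calc ∫ z in Aᶜ, f (x + z) * ν z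
        ≤ ∫ z in Aᶜ, (ball y R).indicator (fun w => Mf * ν w) z := hstep
      _ = ∫ z in Aᶜ ∩ ball y R, Mf * ν z := setIntegral_indicator measurableSet_ball
      _ = ∫ z in ball y R \ A, Mf * ν z := by rw [← Set.diff_eq_compl_inter]
      _ = Mf * ∫ z in ball y R \ A, ν z := integral_const_mul _ _
  have b2b : ∫ z in ball y R \ A, ν z ≤ ∫ z in B2 \ A, ν z :=
    rearrange hd ν hνnn hmono hmeas y hr hR i2r
  have b3 : 0 ≤ ∫ z in Aᶜ, f x * ν z :=
    setIntegral_nonneg hmA.compl fun z _ => mul_nonneg (hfnn x) (hνnn z)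
  -- identify L r - L (R + r)
  have hRr : (0:ℝ) < R + r := by linarith
  have b4 : L r - L (R + r) = ∫ z in B2 \ A, ν z := by
    rw [hL r hr, hL (R + r) hRr]
    have hu : Aᶜ = (B2 \ A) ∪ B2ᶜ := by
      ext z
      constructor
      · intro hz
        by_cases hzB : z ∈ B2
        · exact Or.inl ⟨hzB, hz⟩
        · exact Or.inr hzB
      · rintro (⟨_, hz⟩ | hz)
        · exact hz
        · exact fun hzA => hz (ball_subset_ball (by linarith) hzA)
    have hdisj : Disjoint (B2 \ A) B2ᶜ := disjoint_compl_right.mono_left diff_subset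
    have hi1 : IntegrableOn ν (B2 \ A) := i2r.mono_set fun z hz => hz.2
    have hi2 : IntegrableOn ν B2ᶜ := i2 (R + r) hRr
    rw [hu, setIntegral_union hdisj measurableSet_ball.compl hi1 hi2]
    ring
  -- identify r ^ 2 * K r
  have b5 : (d:ℝ)^2 * (M2 * r^2 * K r) =
      (d:ℝ)^2 * M2 * (σ2 * d) + (d:ℝ)^2 * M2 * ∫ z in A, ‖z‖^2 * ν z := by
    have hInt_eq : ∫ z in A, ‖z‖^2 / r^2 * ν z = (r^2)⁻¹ * ∫ z in A, ‖z‖^2 * ν z := by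
      rw [← integral_const_mul]
      exact integral_congr_ae (Filter.Eventually.of_forall fun z => by ring)
    have hr2 : (r:ℝ)^2 ≠ 0 := by positivity
    rw [hK r hr, hInt_eq]
    field_simp
  -- the second-derivative trace term
  have b6 : σ2 * (∑ i : Fin d, iteratedFDeriv ℝ 2 f x
      ![EuclideanSpace.single i 1, EuclideanSpace.single i 1]) ≤ (d:ℝ)^2 * M2 * (σ2 * d) := by
    have hsum : (∑ i : Fin d, iteratedFDeriv ℝ 2 f x
        ![EuclideanSpace.single i 1, EuclideanSpace.single i 1]) ≤ (d:ℝ) * M2 := by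
      calc (∑ i : Fin d, iteratedFDeriv ℝ 2 f x
          ![EuclideanSpace.single i 1, EuclideanSpace.single i 1])
          ≤ ∑ i : Fin d, M2 :=
            Finset.sum_le_sum fun i _ => (le_abs_self _).trans (hM2 x i i)
        _ = (d:ℝ) * M2 := by
            rw [Finset.sum_const, Finset.card_univ, Fintype.card_fin, nsmul_eq_mul]
    calc σ2 * (∑ i : Fin d, iteratedFDeriv ℝ 2 f x
        ![EuclideanSpace.single i 1, EuclideanSpace.single i 1])
        ≤ σ2 * ((d:ℝ) * M2) := mul_le_mul_of_nonneg_left hsum hσ2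
      _ ≤ (d:ℝ)^2 * M2 * (σ2 * d) := by
          have t0 : 0 ≤ σ2 * M2 := mul_nonneg hσ2 hM2nn
          have hd3 : (d:ℝ) ≤ (d:ℝ)^2 * d := by nlinarith [hd1]
          calc σ2 * ((d:ℝ) * M2) = (σ2 * M2) * d := by ring
            _ ≤ (σ2 * M2) * ((d:ℝ)^2 * d) := mul_le_mul_of_nonneg_left hd3 t0
            _ = (d:ℝ)^2 * M2 * (σ2 * d) := by ring
  -- final assembly
  have hMfb : Mf * ∫ z in ball y R \ A, ν z ≤ Mf * ∫ z in B2 \ A, ν z :=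
    mul_le_mul_of_nonneg_left b2b hMfnn
  have b4' : Mf * (L r - L (R + r)) = Mf * ∫ z in B2 \ A, ν z := by rw [b4]
  have hIeq : ∫ z, F z = (∫ z in A, Tay z * ν z) +
      ((∫ z in Aᶜ, f (x + z) * ν z) - ∫ z in Aᶜ, f x * ν z) := by
    rw [hsplit, hInner, hodd1, add_zero, hOuter]
  rw [hF] at hIeq
  rw [hIeq]
  linarith [b1, b2a, b3, hMfb, b4', b5, b6]
end main
end
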